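/- In the binary system (β = 2), if K is an odd natural number and X is any natural number, then the multi-number carry value transformation of K copies of X equals the sum of K − 1 of the numbers: CVT_2(X, X, …, X) [K copies] = (K − 1)·X. -/

import Mathlib

/-! For odd `K = 2m + 1`, every column of `K` copies of `X` holds `K` equal bits, so its
carry is `m` times that bit, shifted one place up. Summing over the columns gives
`2m · X = (K - 1) · X`. -/

/-- The `i`-th base-`β` digit of `X`. -/
def digit (β X i : ℕ) : ℕ := X / β ^ i % β

/-- Column sum at digit position `i` of a list of naturals in base `β`. -/
def colSum (β : ℕ) (L : List ℕ) (i : ℕ) : ℕ := (L.map fun X => digit β X i).sum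

/-- Multi-number XOR in base `β`. -/
noncomputable def XORb (β : ℕ) (L : List ℕ) : ℕ := ∑ᶠ i : ℕ, (colSum β L i % β) * β ^ i

/-- Multi-number carry value transformation in base `β`. -/
noncomputable def CVTb (β : ℕ) (L : List ℕ) : ℕ := ∑ᶠ i : ℕ, (colSum β L i / β) * β ^ (i + 1)

open Finset

lemma digit_eq_zero_of_lt_pow {β X i : ℕ} (h : X < β ^ i) : digit β X i = 0 := by
  simp [digit, Nat.div_eq_of_lt h]

lemma sum_range_digit_mul_pow (β X n : ℕ) :
    ∑ i ∈ range n, digit β X i * β ^ i = X % β ^ n := by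
  induction n with
  | zero => simp [Nat.mod_one]
  | succ n ih => rw [sum_range_succ, ih, pow_succ, Nat.mod_mul, digit, mul_comm (β ^ n)]

lemma finsum_digit_mul_pow {β : ℕ} (hβ : 1 < β) (X : ℕ) :
    ∑ᶠ i, digit β X i * β ^ i = X := by
  have hX : X < β ^ X := Nat.lt_pow_self hβ
  have hsupp : (Function.support fun i => digit β X i * β ^ i) ⊆ range X := by
    intro i hi
    by_contra hiX
    simp only [coe_range, Set.mem_Iio, not_lt] at hiX
    apply Function.mem_support.mp hi
    rw [digit_eq_zero_of_lt_pow (hX.trans_le (Nat.pow_le_pow_right (by omega) hiX)), zero_mul]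
  rw [finsum_eq_sum_of_support_subset _ hsupp, sum_range_digit_mul_pow, Nat.mod_eq_of_lt hX]

lemma colSum_replicate (β K X i : ℕ) : colSum β (List.replicate K X) i = K * digit β X i := by
  simp [colSum, List.map_replicate, List.sum_replicate]

lemma digit_two_le_one (X i : ℕ) : digit 2 X i ≤ 1 :=
  Nat.le_of_lt_succ (Nat.mod_lt _ two_pos)

lemma mul_div_two_mul_two_of_odd {K d : ℕ} (hK : Odd K) (hd : d ≤ 1) :
    K * d / 2 * 2 = (K - 1) * d := by
  have := Nat.div_two_mul_two_add_one_of_odd hK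
  interval_cases d <;> omega

theorem stmt_6 (K X : ℕ) (hK : Odd K) :
    CVTb 2 (List.replicate K X) = (K - 1) * X := by
  have hcolumn : ∀ i, colSum 2 (List.replicate K X) i / 2 * 2 ^ (i + 1) =
      (K - 1) * (digit 2 X i * 2 ^ i) := fun i => by
    rw [colSum_replicate, pow_succ, mul_comm (2 ^ i), ← mul_assoc,
      mul_div_two_mul_two_of_odd hK (digit_two_le_one X i)]
    ring
  rw [CVTb, finsum_congr hcolumn, ← mul_finsum, finsum_digit_mul_pow one_lt_two]
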